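/- Suppose f = g ∘ ℬ, where ℬ : E₁ → E₃ is a continuous linear map into a finite-dimensional real inner product space E₃ and g : E₃ → ℝ is differentiable and α_g-strongly convex, R_Q is proper, lower semicontinuous and convex, and the augmented Lagrangian L_ρ (ρ > 0) has a saddle point. Then any two optimal solutions q₁* = (x₁*, y₁*) and q₂* = (x₂*, y₂*) of Problem (OP) satisfy ℬx₁* = ℬx₂*. -/

import Mathlib

/-!
The saddle point `(q̄, w̄)` forces `𝒦q̄ = 0` with `R_Q(q̄)` finite, so the optimal value of (OP) is
finite. If `ℬx₁* ≠ ℬx₂*`, the midpoint of `q₁*` and `q₂*` is feasible, and strict convexity of `g`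
(implied by its strong convexity) together with convexity of `R_Q` gives it an objective value
strictly below the common optimal value.
-/

open scoped RealInnerProductSpace
noncomputable section

variable {E₁ E₂ E₃ : Type*}
  [NormedAddCommGroup E₁] [InnerProductSpace ℝ E₁] [FiniteDimensional ℝ E₁]
  [NormedAddCommGroup E₂] [InnerProductSpace ℝ E₂] [FiniteDimensional ℝ E₂]
  [NormedAddCommGroup E₃] [InnerProductSpace ℝ E₃] [FiniteDimensional ℝ E₃]

/-- first component of a point of `E := E₁ ×₂ E₂` -/
def xPart (q : WithLp 2 (E₁ × E₂)) : E₁ := (WithLp.equiv 2 (E₁ × E₂) q).1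

/-- The constraint map `𝒦(x,y) := 𝒜x − y`, as a continuous linear map. -/
def Kmap (A : E₁ →L[ℝ] E₂) : WithLp 2 (E₁ × E₂) →L[ℝ] E₂ :=
  (A.comp (ContinuousLinearMap.fst ℝ E₁ E₂) - ContinuousLinearMap.snd ℝ E₁ E₂).comp
    (WithLp.prodContinuousLinearEquiv 2 ℝ E₁ E₂).toContinuousLinearMap

/-- objective of Problem (OP): `h(q) := f(x) + R_Q(q)` -/
def hOP (f : E₁ → ℝ) (RQ : WithLp 2 (E₁ × E₂) → EReal) (q : WithLp 2 (E₁ × E₂)) : EReal :=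
  (f (xPart q) : EReal) + RQ q

/-- the augmented Lagrangian `L_ρ(q,w) := h(q) + ⟨w,𝒦q⟩ + (ρ/2)‖𝒦q‖²` -/
def AL (f : E₁ → ℝ) (RQ : WithLp 2 (E₁ × E₂) → EReal) (A : E₁ →L[ℝ] E₂) (ρ : ℝ)
    (q : WithLp 2 (E₁ × E₂)) (w : E₂) : EReal :=
  hOP f RQ q + ((⟪w, Kmap A q⟫ + ρ / 2 * ‖Kmap A q‖ ^ 2 : ℝ) : EReal)

/-- saddle point of the augmented Lagrangian -/
def IsSaddle (f : E₁ → ℝ) (RQ : WithLp 2 (E₁ × E₂) → EReal) (A : E₁ →L[ℝ] E₂) (ρ : ℝ)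
    (qs : WithLp 2 (E₁ × E₂)) (ws : E₂) : Prop :=
  ∀ q : WithLp 2 (E₁ × E₂), ∀ w : E₂,
    AL f RQ A ρ qs w ≤ AL f RQ A ρ qs ws ∧ AL f RQ A ρ qs ws ≤ AL f RQ A ρ q ws

/-- set of optimal solutions of Problem (OP) -/
def OptSet (f : E₁ → ℝ) (RQ : WithLp 2 (E₁ × E₂) → EReal) (A : E₁ →L[ℝ] E₂) :
    Set (WithLp 2 (E₁ × E₂)) :=
  {q | Kmap A q = 0 ∧ ∀ p, Kmap A p = 0 → hOP f RQ q ≤ hOP f RQ p}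

/-- a proper function with values in `(-∞, +∞]` -/
def ProperFun {V : Type*} (R : V → EReal) : Prop :=
  (∃ x, R x ≠ ⊤) ∧ ∀ x, R x ≠ ⊥

/-- convexity for `EReal`-valued functions -/
def ERConvexOn {V : Type*} [AddCommGroup V] [Module ℝ V] (R : V → EReal) : Prop :=
  ∀ x y : V, ∀ a b : ℝ, 0 ≤ a → 0 ≤ b → a + b = 1 →
    R (a • x + b • y) ≤ (a : EReal) * R x + (b : EReal) * R y

open Set

theorem strongConvexOn_univ_of_first_order {F : Type*} [NormedAddCommGroup F]
    [InnerProductSpace ℝ F] {g : F → ℝ} {d : F → F} {α : ℝ}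
    (hg : ∀ u v, g v ≥ g u + ⟪d u, v - u⟫ + α / 2 * ‖v - u‖ ^ 2) :
    StrongConvexOn univ α g := by
  refine ⟨convex_univ, fun x _ y _ a b ha hb hab => ?_⟩
  obtain rfl : b = 1 - a := by linarith
  set m := a • x + (1 - a) • y
  have hx := hg m x
  have hy := hg m y
  rw [show x - m = (1 - a) • (x - y) by module, inner_smul_right, norm_smul,
    Real.norm_of_nonneg hb] at hx
  rw [show y - m = (-a) • (x - y) by module, inner_smul_right, norm_smul, norm_neg,
    Real.norm_of_nonneg ha] at hy
  simp only [smul_eq_mul]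
  linear_combination a * hx + (1 - a) * hy

theorem ERConvexOn.le_coe {V : Type*} [AddCommGroup V] [Module ℝ V] {R : V → EReal}
    (hR : ERConvexOn R) {x y : V} {r s a b : ℝ} (hx : R x = r) (hy : R y = s)
    (ha : 0 ≤ a) (hb : 0 ≤ b) (hab : a + b = 1) :
    R (a • x + b • y) ≤ ((a * r + b * s : ℝ) : EReal) := by
  simpa only [hx, hy, EReal.coe_add, EReal.coe_mul] using hR x y a b ha hb hab

theorem eq_of_isMinOn_comp_add {V W : Type*} [AddCommGroup V] [Module ℝ V] [AddCommGroup W]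
    [Module ℝ W] {g : W → ℝ} (hg : StrictConvexOn ℝ univ g) (L : V →ₗ[ℝ] W) {R : V → EReal}
    (hR : ERConvexOn R) (hR_bot : ∀ x, R x ≠ ⊥) {S : Set V} (hS : Convex ℝ S) {p q : V}
    (hp : p ∈ S) (hq : q ∈ S) (hp_min : IsMinOn (fun z => (g (L z) : EReal) + R z) S p)
    (hq_min : IsMinOn (fun z => (g (L z) : EReal) + R z) S q) (hRp : R p ≠ ⊤) :
    L p = L q := by
  have hRq : R q ≠ ⊤ := fun h => EReal.add_ne_top (EReal.coe_ne_top _) hRp <|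
    top_le_iff.mp (by simpa [h] using hq_min hp)
  have hmin : ∀ {a b : V} {ra rb : ℝ}, IsMinOn (fun z => (g (L z) : EReal) + R z) S a →
      b ∈ S → R a = ra → R b = rb → g (L a) + ra ≤ g (L b) + rb := fun ha hb hra hrb => by
    exact_mod_cast hra ▸ hrb ▸ isMinOn_iff.mp ha _ hb
  obtain ⟨r₁, hr₁⟩ : ∃ r : ℝ, R p = r := ⟨_, (EReal.coe_toReal hRp (hR_bot p)).symm⟩
  obtain ⟨r₂, hr₂⟩ : ∃ r : ℝ, R q = r := ⟨_, (EReal.coe_toReal hRq (hR_bot q)).symm⟩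
  by_contra hne
  set m := (2⁻¹ : ℝ) • p + (2⁻¹ : ℝ) • q
  have hmS : m ∈ S := hS hp hq (by norm_num) (by norm_num) (by norm_num)
  have hRm : R m ≤ ((2⁻¹ * r₁ + 2⁻¹ * r₂ : ℝ) : EReal) :=
    hR.le_coe hr₁ hr₂ (by norm_num) (by norm_num) (by norm_num)
  obtain ⟨rm, hrm⟩ : ∃ r : ℝ, R m = r :=
    ⟨_, (EReal.coe_toReal (ne_top_of_le_ne_top (EReal.coe_ne_top _) hRm) (hR_bot m)).symm⟩
  rw [hrm, EReal.coe_le_coe_iff] at hRm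
  have hgm : g (L m) < 2⁻¹ * g (L p) + 2⁻¹ * g (L q) := by
    simpa only [m, map_add, map_smul, smul_eq_mul] using
      hg.2 (mem_univ _) (mem_univ _) hne (by norm_num : (0 : ℝ) < 2⁻¹) (by norm_num) (by norm_num)
  linarith [hmin hp_min hq hr₁ hr₂, hmin hq_min hp hr₂ hr₁, hmin hp_min hmS hr₁ hrm]

section Saddle

variable {X Y : Type*} {f : X → ℝ} {RQ : WithLp 2 (X × Y) → EReal}

theorem hOP_ne_top_iff {q : WithLp 2 (X × Y)} : hOP f RQ q ≠ ⊤ ↔ RQ q ≠ ⊤ :=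
  EReal.add_ne_top_iff_ne_top_right (EReal.coe_ne_bot _) (EReal.coe_ne_top _)

variable [NormedAddCommGroup X] [InnerProductSpace ℝ X] [NormedAddCommGroup Y]
  [InnerProductSpace ℝ Y] {A : X →L[ℝ] Y} {ρ : ℝ}

theorem AL_ne_top_iff {q : WithLp 2 (X × Y)} {w : Y} : AL f RQ A ρ q w ≠ ⊤ ↔ RQ q ≠ ⊤ :=
  (EReal.add_ne_top_iff_ne_top_left (EReal.coe_ne_bot _) (EReal.coe_ne_top _)).trans
    hOP_ne_top_iff

theorem AL_eq_coe {q : WithLp 2 (X × Y)} {w : Y} {r : ℝ} (hr : RQ q = r) :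
    AL f RQ A ρ q w =
      ((f (xPart q) + r + (⟪w, Kmap A q⟫ + ρ / 2 * ‖Kmap A q‖ ^ 2) : ℝ) : EReal) := by
  simp only [AL, hOP, hr, EReal.coe_add]

theorem IsSaddle.kmap_eq_zero_and_ne_top {qs : WithLp 2 (X × Y)} {ws : Y}
    (hs : IsSaddle f RQ A ρ qs ws) (hRQ : ProperFun RQ) : Kmap A qs = 0 ∧ RQ qs ≠ ⊤ := by
  obtain ⟨⟨x₀, hx₀⟩, hRQ_bot⟩ := hRQ
  have hqs : RQ qs ≠ ⊤ := by
    refine AL_ne_top_iff.mp (ne_top_of_le_ne_top ?_ (hs x₀ ws).2)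
    exact AL_ne_top_iff.mpr hx₀
  refine ⟨?_, hqs⟩
  obtain ⟨r, hr⟩ : ∃ r : ℝ, RQ qs = r := ⟨_, (EReal.coe_toReal hqs (hRQ_bot qs)).symm⟩
  -- the dual step `ws ↦ ws + 𝒦qs` raises `L_ρ(qs, ·)` by `‖𝒦qs‖²`
  have h := (hs qs (ws + Kmap A qs)).1
  rw [AL_eq_coe hr, AL_eq_coe hr, EReal.coe_le_coe_iff, inner_add_left,
    real_inner_self_eq_norm_sq] at h
  exact norm_eq_zero.mp (by nlinarith [norm_nonneg (Kmap A qs)])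

end Saddle

theorem B_equal_on_optimal_general (g : E₃ → ℝ) (B : E₁ →L[ℝ] E₃) (f : E₁ → ℝ)
    (hf : f = fun x => g (B x))
    (αg : ℝ) (hαg : 0 < αg)
    (hgsc : ∀ u v : E₃, g v ≥ g u + ⟪gradient g u, v - u⟫ + αg / 2 * ‖v - u‖ ^ 2)
    (RQ : WithLp 2 (E₁ × E₂) → EReal)
    (hRQproper : ProperFun RQ) (hRQconv : ERConvexOn RQ)
    (A : E₁ →L[ℝ] E₂) (ρ : ℝ)
    (hsaddle : ∃ qs ws, IsSaddle f RQ A ρ qs ws)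
    (q₁ q₂ : WithLp 2 (E₁ × E₂))
    (hq₁ : q₁ ∈ OptSet f RQ A) (hq₂ : q₂ ∈ OptSet f RQ A) :
    B (xPart q₁) = B (xPart q₂) := by
  obtain ⟨qs, ws, hs⟩ := hsaddle
  obtain ⟨hKqs, hqs⟩ := hs.kmap_eq_zero_and_ne_top hRQproper
  have hq₁_fin : RQ q₁ ≠ ⊤ :=
    hOP_ne_top_iff.mp (ne_top_of_le_ne_top (hOP_ne_top_iff.mpr hqs) (hq₁.2 qs hKqs))
  subst hf
  exact eq_of_isMinOn_comp_add ((strongConvexOn_univ_of_first_order hgsc).strictConvexOn hαg)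
    (B.toLinearMap ∘ₗ LinearMap.fst ℝ E₁ E₂ ∘ₗ (WithLp.linearEquiv 2 ℝ (E₁ × E₂)).toLinearMap)
    hRQconv hRQproper.2 (S := {q | Kmap A q = 0})
    ((convex_singleton 0).linear_preimage (Kmap A).toLinearMap) hq₁.1 hq₂.1
    (isMinOn_iff.mpr hq₁.2) (isMinOn_iff.mpr hq₂.2) hq₁_fin

/-- if `f = g ∘ ℬ` with `g` differentiable and `α_g`-strongly convex,
`R_Q` proper lsc convex, and `L_ρ` (ρ > 0) has a saddle point, then any two optimal
solutions `q₁* = (x₁*,y₁*)`, `q₂* = (x₂*,y₂*)` of (OP) satisfy `ℬx₁* = ℬx₂*`. -/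
theorem B_equal_on_optimal (g : E₃ → ℝ) (B : E₁ →L[ℝ] E₃) (f : E₁ → ℝ)
    (hf : f = fun x => g (B x))
    (αg : ℝ) (hαg : 0 < αg) (hgdiff : Differentiable ℝ g)
    (hgsc : ∀ u v : E₃, g v ≥ g u + ⟪gradient g u, v - u⟫ + αg / 2 * ‖v - u‖ ^ 2)
    (RQ : WithLp 2 (E₁ × E₂) → EReal)
    (hRQproper : ProperFun RQ) (hRQlsc : LowerSemicontinuous RQ) (hRQconv : ERConvexOn RQ)
    (A : E₁ →L[ℝ] E₂) (ρ : ℝ) (hρ : 0 < ρ)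
    (hsaddle : ∃ qs ws, IsSaddle f RQ A ρ qs ws)
    (q₁ q₂ : WithLp 2 (E₁ × E₂))
    (hq₁ : q₁ ∈ OptSet f RQ A) (hq₂ : q₂ ∈ OptSet f RQ A) :
    B (xPart q₁) = B (xPart q₂) :=
  B_equal_on_optimal_general g B f hf αg hαg hgsc RQ hRQproper hRQconv A ρ hsaddle q₁ q₂ hq₁ hq₂

end
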